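/- arXiv:2412.17178 — 2 statements merged into one kernel-verified Lean document; each statement's English description precedes it below -/
import Mathlib

section
/- Let n, d ≥ 1, let U_i, V_i ∈ ℝ^{d×d} (1 ≤ i ≤ n) satisfy Assumption 2 with Q ∈ ℝ^{dn×dn} the associated block-factorizable matrix, and let a ∈ ℝ^{dn} and c ∈ ℝ^n. Call a pair (x, z) with x ∈ ℝ^{dn} and z ∈ {0,1}^n feasible if for every i ∈ {1,…,n}, z_i = 0 implies x_{[i]} = 0 (where x_{[i]} ∈ ℝ^d is the i-th block of x). Then the infimum of xᵀ Q x + aᵀ x + Σ_{i=1}^n c_i z_i over feasible (x, z) is attained, and it equals the minimum over all subsets S = {t_1 < t_2 < … < t_k} of {1,…,n} (with t_{k+1} := n+1, and with value 0 for S = ∅) of Σ_{ℓ=1}^{k} ( c_{t_ℓ} − (1/4) aᵀ Λ_{[t_ℓ → t_{ℓ+1}]} a ). -/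
open Matrix BigOperators
open scoped Classical

/-- The block-factorizable matrix with `(i,j)`-th `d×d` block `U_i V_jᵀ` for `i ≤ j`
and `V_i U_jᵀ` for `i > j`. -/
noncomputable def blockQ (n d : ℕ) (U V : Fin n → Matrix (Fin d) (Fin d) ℝ) :
    Matrix (Fin n × Fin d) (Fin n × Fin d) ℝ :=
  Matrix.of fun p q =>
    if p.1 ≤ q.1 then (U p.1 * (V q.1)ᵀ) p.2 q.2 else (V p.1 * (U q.1)ᵀ) p.2 q.2

/-- Assumption 2. -/
def Assumption2 (n d : ℕ) (U V : Fin n → Matrix (Fin d) (Fin d) ℝ) : Prop :=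
  (∀ i : Fin n, (U i * (V i)ᵀ).PosDef) ∧
    ∀ i j : Fin n, i < j → (U i * (V i)ᵀ - U i * (U j)⁻¹ * V j * (U i)ᵀ).PosDef

/-- `E_i`, the `dn×d` block column matrix whose `i`-th block is the identity. -/
def Emat (n d : ℕ) (i : Fin n) : Matrix (Fin n × Fin d) (Fin d) ℝ :=
  Matrix.of fun p b => if p.1 = i ∧ p.2 = b then 1 else 0

/-- `Λ_{[i→j]}` for `1 ≤ i < j ≤ n`. -/
noncomputable def BLamMid (n d : ℕ) (U V : Fin n → Matrix (Fin d) (Fin d) ℝ) (i j : Fin n) :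
    Matrix (Fin n × Fin d) (Fin n × Fin d) ℝ :=
  (Emat n d i - Emat n d j * ((U j)ᵀ)⁻¹ * (U i)ᵀ) *
    (U i * (V i)ᵀ - U i * (U j)⁻¹ * V j * (U i)ᵀ)⁻¹ *
    (Emat n d i - Emat n d j * ((U j)ᵀ)⁻¹ * (U i)ᵀ)ᵀ

/-- `Λ_{[i→n+1]} = E_i (U_i V_iᵀ)⁻¹ E_iᵀ`. -/
noncomputable def BLamEnd (n d : ℕ) (U V : Fin n → Matrix (Fin d) (Fin d) ℝ) (i : Fin n) :
    Matrix (Fin n × Fin d) (Fin n × Fin d) ℝ :=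
  Emat n d i * (U i * (V i)ᵀ)⁻¹ * (Emat n d i)ᵀ

/-- For `S = {t_1 < … < t_k}` (with `t_{k+1} := n+1`), the sum
`Σ_{ℓ=1}^{k} (c_{t_ℓ} − (1/4) aᵀ Λ_{[t_ℓ → t_{ℓ+1}]} a)`: each `i ∈ S` is paired with the
next element of `S` if one exists, and with `n+1` otherwise. Empty `S` gives `0`. -/
noncomputable def subsetCost (n d : ℕ) (U V : Fin n → Matrix (Fin d) (Fin d) ℝ)
    (a : Fin n × Fin d → ℝ) (c : Fin n → ℝ) (S : Finset (Fin n)) : ℝ :=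
  ∑ i ∈ S,
    if h : (S.filter fun j => i < j).Nonempty then
      c i - (1 / 4) * (a ⬝ᵥ (BLamMid n d U V i ((S.filter fun j => i < j).min' h) *ᵥ a))
    else
      c i - (1 / 4) * (a ⬝ᵥ (BLamEnd n d U V i *ᵥ a))

/-!
Fix the support `S = {i | z i = 1}`. The remaining problem is to minimise `xᵀ Q x + aᵀ x` over
the subspace `W_S` of vectors whose blocks outside `S` vanish. Put `Λ_S = ∑_{i ∈ S} Λ_{[i → i⁺]}`,
where `i⁺` is the successor of `i` in `S` (or `n + 1`). For `j ≤ i < i'` one computes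
`Λ_{[i→i']} Q E_j = E_i U_i⁻ᵀ U_jᵀ - E_{i'} U_{i'}⁻ᵀ U_jᵀ`, while `Λ_{[i→i']} Q E_j = 0` for
`i' ≤ j`; hence `Λ_S Q E_j` telescopes to `E_j` for `j ∈ S`, i.e. `Λ_S Q = id` on `W_S`.
Since `Λ_S` is positive semidefinite and maps into `W_S`, completing the square gives
`xᵀ Q x + aᵀ x = -¼ aᵀ Λ_S a + hᵀ Q h` with `h = x + ½ Λ_S a ∈ W_S` and
`hᵀ Q h = (Q h)ᵀ Λ_S (Q h) ≥ 0`. So the minimum over `W_S` is `-¼ aᵀ Λ_S a`, attained at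
`x = -½ Λ_S a`, and it remains to minimise over `S`.
-/

theorem Matrix.IsSymm.dotProduct_mulVec_comm {ι R : Type*} [Fintype ι] [CommSemiring R]
    {M : Matrix ι ι R} (hM : M.IsSymm) (v w : ι → R) : v ⬝ᵥ M *ᵥ w = (M *ᵥ v) ⬝ᵥ w := by
  rw [dotProduct_mulVec, ← mulVec_transpose, hM.eq, dotProduct_comm]

theorem Matrix.PosSemidef.isSymm {ι R : Type*} [Ring R] [PartialOrder R] [StarRing R]
    [TrivialStar R] {M : Matrix ι ι R} (hM : M.PosSemidef) : M.IsSymm := by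
  simpa [Matrix.IsSymm, conjTranspose_eq_transpose_of_trivial] using hM.isHermitian.eq

theorem Matrix.inv_mul_eq_inv_of_eq_mul {m R : Type*} [Fintype m] [DecidableEq m] [CommRing R]
    {B X Y : Matrix m m R} (hB : IsUnit B.det) (hY : IsUnit Y.det) (h : B = X * Y) :
    B⁻¹ * X = Y⁻¹ := by
  calc B⁻¹ * X = B⁻¹ * (B * Y⁻¹) := by
        rw [h, Matrix.mul_assoc, Matrix.mul_nonsing_inv _ hY, Matrix.mul_one]
    _ = Y⁻¹ := Matrix.nonsing_inv_mul_cancel_left _ _ hB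

theorem Finset.coe_lt_min_filter_lt {α : Type*} [LinearOrder α] (s : Finset α) (i : α) :
    ↑i < (s.filter fun j => i < j).min := by
  cases h : (s.filter fun j => i < j).min with
  | top => exact WithTop.coe_lt_top i
  | coe k => exact WithTop.coe_lt_coe.mpr (Finset.mem_filter.mp (Finset.mem_of_min h)).2

theorem Finset.sum_sub_min_filter_lt {α M : Type*} [LinearOrder α] [AddCommGroup M]
    (f : WithTop α → M) (hf : f ⊤ = 0) (s : Finset α) :
    ∑ i ∈ s, (f i - f (s.filter fun j => i < j).min) = f s.min := by
  induction s using Finset.induction_on_min with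
  | empty => simp [hf]
  | insert a s ha ih =>
    have hnext : ∀ i ∈ s, (insert a s).filter (fun j => i < j) = s.filter fun j => i < j :=
      fun i hi => by rw [Finset.filter_insert, if_neg fun h => lt_asymm h (ha i hi)]
    have hfirst : (insert a s).filter (fun j => a < j) = s := by
      rw [Finset.filter_insert, if_neg (lt_irrefl a), Finset.filter_true_of_mem ha]
    have hmin : (insert a s).min = a := by
      rw [Finset.min_insert,
        min_eq_left (Finset.le_min fun x hx => WithTop.coe_le_coe.mpr (ha x hx).le)]
    rw [Finset.sum_insert fun h => lt_irrefl a (ha a h), hfirst, hmin,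
      Finset.sum_congr rfl fun i hi => by rw [hnext i hi], ih, sub_add_cancel]

section LeftInverseOn

variable {ι : Type*} [Fintype ι]

theorem dotProduct_mulVec_mulVec_of_leftInverseOn {R : Type*} [CommSemiring R]
    {Q L : Matrix ι ι R} {W : Submodule R (ι → R)} (hQ : Q.IsSymm) (hL : L.IsSymm)
    (hLQ : ∀ x ∈ W, L *ᵥ Q *ᵥ x = x) {x : ι → R} (hx : x ∈ W) (a : ι → R) :
    x ⬝ᵥ Q *ᵥ L *ᵥ a = a ⬝ᵥ x := by
  rw [hQ.dotProduct_mulVec_comm, hL.dotProduct_mulVec_comm, hLQ x hx, dotProduct_comm]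

theorem dotProduct_mulVec_nonneg_of_leftInverseOn {R : Type*} [CommRing R] [PartialOrder R]
    [StarRing R] [TrivialStar R] {Q L : Matrix ι ι R} {W : Submodule R (ι → R)}
    (hL : L.PosSemidef) (hLQ : ∀ x ∈ W, L *ᵥ Q *ᵥ x = x) {x : ι → R} (hx : x ∈ W) :
    0 ≤ x ⬝ᵥ Q *ᵥ x := by
  have h := hL.dotProduct_mulVec_nonneg (Q *ᵥ x)
  rwa [star_trivial, hL.isSymm.dotProduct_mulVec_comm, hLQ x hx] at h

theorem quadratic_eq_of_leftInverseOn {𝕜 : Type*} [Field 𝕜] [CharZero 𝕜]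
    {Q L : Matrix ι ι 𝕜} {W : Submodule 𝕜 (ι → 𝕜)} (hQ : Q.IsSymm) (hL : L.IsSymm)
    (hLQ : ∀ x ∈ W, L *ᵥ Q *ᵥ x = x) (hLW : ∀ v, L *ᵥ v ∈ W) {x : ι → 𝕜} (hx : x ∈ W)
    (a : ι → 𝕜) :
    x ⬝ᵥ Q *ᵥ x + a ⬝ᵥ x =
      -(1 / 4) * (a ⬝ᵥ L *ᵥ a) +
        (x + (1 / 2 : 𝕜) • L *ᵥ a) ⬝ᵥ Q *ᵥ (x + (1 / 2 : 𝕜) • L *ᵥ a) := by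
  have hxw := dotProduct_mulVec_mulVec_of_leftInverseOn hQ hL hLQ hx a
  have hww := dotProduct_mulVec_mulVec_of_leftInverseOn hQ hL hLQ (hLW a) a
  have hwx : (L *ᵥ a) ⬝ᵥ Q *ᵥ x = x ⬝ᵥ Q *ᵥ L *ᵥ a := by
    rw [hQ.dotProduct_mulVec_comm, dotProduct_comm]
  simp only [mulVec_add, mulVec_smul, add_dotProduct, dotProduct_add, smul_dotProduct,
    dotProduct_smul, smul_eq_mul, hwx, hxw, hww]
  ring

theorem isLeast_quadratic_of_leftInverseOn {𝕜 : Type*} [Field 𝕜] [LinearOrder 𝕜]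
    [IsStrictOrderedRing 𝕜] [StarRing 𝕜] [TrivialStar 𝕜] {Q L : Matrix ι ι 𝕜}
    {W : Submodule 𝕜 (ι → 𝕜)} (hQ : Q.IsSymm) (hL : L.PosSemidef)
    (hLQ : ∀ x ∈ W, L *ᵥ Q *ᵥ x = x) (hLW : ∀ v, L *ᵥ v ∈ W) (a : ι → 𝕜) :
    IsLeast ((fun x => x ⬝ᵥ Q *ᵥ x + a ⬝ᵥ x) '' W) (-(1 / 4) * (a ⬝ᵥ L *ᵥ a)) := by
  have hquad := fun {x} hx => quadratic_eq_of_leftInverseOn hQ hL.isSymm hLQ hLW (x := x) hx a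
  refine ⟨⟨-(1 / 2 : 𝕜) • L *ᵥ a, W.smul_mem _ (hLW a), ?_⟩, ?_⟩
  · simp only [hquad (W.smul_mem _ (hLW a))]
    norm_num
  · rintro _ ⟨x, hx, rfl⟩
    have := dotProduct_mulVec_nonneg_of_leftInverseOn hL hLQ
      (W.add_mem hx (W.smul_mem (1 / 2 : 𝕜) (hLW a)))
    simp only [hquad hx]
    linarith

end LeftInverseOn

variable {n d : ℕ}

theorem Emat_mulVec_apply (i : Fin n) (v : Fin d → ℝ) (p : Fin n × Fin d) :
    (Emat n d i *ᵥ v) p = if p.1 = i then v p.2 else 0 := by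
  by_cases h : p.1 = i <;> simp [Emat, mulVec, dotProduct, h]

theorem Emat_transpose_mul_mul_Emat (M : Matrix (Fin n × Fin d) (Fin n × Fin d) ℝ) (i j : Fin n) :
    (Emat n d i)ᵀ * M * Emat n d j = of fun b b' => M (i, b) (j, b') := by
  ext b b'
  simp [Emat, Matrix.mul_apply, Fintype.sum_prod_type, ite_and]

def blockSupported (n d : ℕ) (S : Finset (Fin n)) : Submodule ℝ (Fin n × Fin d → ℝ) :=
  Submodule.pi {p | p.1 ∉ S} fun _ => ⊥

theorem mem_blockSupported {S : Finset (Fin n)} {x : Fin n × Fin d → ℝ} :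
    x ∈ blockSupported n d S ↔ ∀ p : Fin n × Fin d, p.1 ∉ S → x p = 0 := by
  simp [blockSupported, Submodule.mem_pi]

theorem Emat_mul_mulVec_mem_blockSupported {α : Type*} [Fintype α] {S : Finset (Fin n)} {i : Fin n}
    (hi : i ∈ S) (M : Matrix (Fin d) α ℝ) (v : α → ℝ) :
    (Emat n d i * M) *ᵥ v ∈ blockSupported n d S := by
  rw [mem_blockSupported]
  intro p hp
  rw [← mulVec_mulVec, Emat_mulVec_apply, if_neg (show p.1 ≠ i from fun h => hp (h ▸ hi))]

theorem sum_Emat_mulVec_of_mem_blockSupported {S : Finset (Fin n)} {x : Fin n × Fin d → ℝ}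
    (hx : x ∈ blockSupported n d S) : ∑ j ∈ S, Emat n d j *ᵥ (fun b => x (j, b)) = x := by
  ext p
  rw [mem_blockSupported] at hx
  by_cases hp : p.1 ∈ S
  · simp [Finset.sum_apply, Emat_mulVec_apply, hp]
  · simp [Finset.sum_apply, Emat_mulVec_apply, hp, hx p hp]

namespace Assumption2

variable {U V : Fin n → Matrix (Fin d) (Fin d) ℝ}

theorem isUnit_det_U (hA : Assumption2 n d U V) (i : Fin n) : IsUnit (U i).det := by
  have h := (Matrix.isUnit_iff_isUnit_det _).mp (hA.1 i).isUnit
  rw [Matrix.det_mul] at h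
  exact isUnit_of_mul_isUnit_left h

theorem isUnit_det_U_transpose (hA : Assumption2 n d U V) (i : Fin n) : IsUnit (U i)ᵀ.det := by
  rw [Matrix.det_transpose]
  exact hA.isUnit_det_U i

theorem V_mul_U_transpose (hA : Assumption2 n d U V) (i : Fin n) :
    V i * (U i)ᵀ = U i * (V i)ᵀ := by
  simpa [Matrix.transpose_mul, conjTranspose_eq_transpose_of_trivial] using (hA.1 i).isHermitian.eq

end Assumption2

variable {U V : Fin n → Matrix (Fin d) (Fin d) ℝ}

theorem Emat_transpose_mul_blockQ_mul_Emat_of_le {i j : Fin n} (h : i ≤ j) :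
    (Emat n d i)ᵀ * blockQ n d U V * Emat n d j = U i * (V j)ᵀ := by
  rw [Emat_transpose_mul_mul_Emat]
  ext b b'
  simp [blockQ, h]

theorem Emat_transpose_mul_blockQ_mul_Emat_of_ge (hA : Assumption2 n d U V) {i j : Fin n}
    (h : j ≤ i) : (Emat n d i)ᵀ * blockQ n d U V * Emat n d j = V i * (U j)ᵀ := by
  rcases h.lt_or_eq with h | rfl
  · rw [Emat_transpose_mul_mul_Emat]
    ext b b'
    simp [blockQ, h.not_ge]
  · rw [Emat_transpose_mul_blockQ_mul_Emat_of_le le_rfl, hA.V_mul_U_transpose]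

theorem blockQ_isSymm (hA : Assumption2 n d U V) : (blockQ n d U V).IsSymm := by
  refine Matrix.IsSymm.ext fun p q => ?_
  rcases lt_trichotomy p.1 q.1 with h | h | h
  · simp only [blockQ, of_apply, if_pos h.le, if_neg h.not_ge]
    rw [← transpose_apply (U p.1 * _), transpose_mul, transpose_transpose]
  · simp only [blockQ, of_apply, h, le_refl, if_true]
    simpa using (hA.1 q.1).isHermitian.apply p.2 q.2
  · simp only [blockQ, of_apply, if_pos h.le, if_neg h.not_ge]
    rw [← transpose_apply (U q.1 * _), transpose_mul, transpose_transpose]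

theorem BLamEnd_mul_blockQ_mul_Emat (hA : Assumption2 n d U V) {i j : Fin n} (h : j ≤ i) :
    BLamEnd n d U V i * blockQ n d U V * Emat n d j = Emat n d i * (((U i)ᵀ)⁻¹ * (U j)ᵀ) := by
  have hUV : (U i * (V i)ᵀ)⁻¹ * V i = ((U i)ᵀ)⁻¹ :=
    inv_mul_eq_inv_of_eq_mul (hA.1 i).det_pos.ne'.isUnit (hA.isUnit_det_U_transpose i)
      (hA.V_mul_U_transpose i).symm
  calc BLamEnd n d U V i * blockQ n d U V * Emat n d j
      = Emat n d i * ((U i * (V i)ᵀ)⁻¹ * ((Emat n d i)ᵀ * blockQ n d U V * Emat n d j)) := by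
        simp only [BLamEnd, Matrix.mul_assoc]
    _ = Emat n d i * (((U i)ᵀ)⁻¹ * (U j)ᵀ) := by
        rw [Emat_transpose_mul_blockQ_mul_Emat_of_ge hA h, ← Matrix.mul_assoc _ (V i), hUV]

theorem BLamMid_mul_blockQ_mul_Emat (i k j : Fin n) :
    BLamMid n d U V i k * blockQ n d U V * Emat n d j =
      (Emat n d i - Emat n d k * ((U k)ᵀ)⁻¹ * (U i)ᵀ) *
        ((U i * (V i)ᵀ - U i * (U k)⁻¹ * V k * (U i)ᵀ)⁻¹ *
          ((Emat n d i)ᵀ * blockQ n d U V * Emat n d j -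
            U i * (U k)⁻¹ * ((Emat n d k)ᵀ * blockQ n d U V * Emat n d j))) := by
  rw [BLamMid, transpose_sub, transpose_mul, transpose_mul, transpose_transpose,
    transpose_nonsing_inv, transpose_transpose]
  simp only [Matrix.mul_assoc, Matrix.sub_mul, Matrix.mul_sub]

theorem BLamMid_mul_blockQ_mul_Emat_of_le (hA : Assumption2 n d U V) {i k j : Fin n}
    (hik : i < k) (hkj : k ≤ j) : BLamMid n d U V i k * blockQ n d U V * Emat n d j = 0 := by
  rw [BLamMid_mul_blockQ_mul_Emat, Emat_transpose_mul_blockQ_mul_Emat_of_le (hik.le.trans hkj),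
    Emat_transpose_mul_blockQ_mul_Emat_of_le hkj, Matrix.mul_assoc (U i) (U k)⁻¹ (U k * (V j)ᵀ),
    Matrix.nonsing_inv_mul_cancel_left _ _ (hA.isUnit_det_U k), sub_self, Matrix.mul_zero,
    Matrix.mul_zero]

theorem BLamMid_mul_blockQ_mul_Emat_of_ge (hA : Assumption2 n d U V) {i k j : Fin n}
    (hik : i < k) (hji : j ≤ i) :
    BLamMid n d U V i k * blockQ n d U V * Emat n d j =
      Emat n d i * (((U i)ᵀ)⁻¹ * (U j)ᵀ) - Emat n d k * (((U k)ᵀ)⁻¹ * (U j)ᵀ) := by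
  set X := V i - U i * (U k)⁻¹ * V k
  have hX : (U i * (V i)ᵀ - U i * (U k)⁻¹ * V k * (U i)ᵀ)⁻¹ * X = ((U i)ᵀ)⁻¹ := by
    refine inv_mul_eq_inv_of_eq_mul (hA.2 i k hik).det_pos.ne'.isUnit
      (hA.isUnit_det_U_transpose i) ?_
    rw [Matrix.sub_mul, hA.V_mul_U_transpose]
  rw [BLamMid_mul_blockQ_mul_Emat, Emat_transpose_mul_blockQ_mul_Emat_of_ge hA hji,
    Emat_transpose_mul_blockQ_mul_Emat_of_ge hA (hji.trans hik.le),
    show V i * (U j)ᵀ - U i * (U k)⁻¹ * (V k * (U j)ᵀ) = X * (U j)ᵀ by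
      rw [Matrix.sub_mul]; simp only [Matrix.mul_assoc],
    ← Matrix.mul_assoc _ X, hX, Matrix.sub_mul]
  simp only [Matrix.mul_assoc]
  rw [Matrix.mul_nonsing_inv_cancel_left _ _ (hA.isUnit_det_U_transpose i)]

/-- `Λ_{[i→i']}`, with `i' = ⊤` playing the role of `n + 1`. -/
noncomputable def Lam (U V : Fin n → Matrix (Fin d) (Fin d) ℝ) (i : Fin n) :
    WithTop (Fin n) → Matrix (Fin n × Fin d) (Fin n × Fin d) ℝ
  | ⊤ => BLamEnd n d U V i
  | (k : Fin n) => BLamMid n d U V i k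

noncomputable def transportedEmat (U : Fin n → Matrix (Fin d) (Fin d) ℝ) (j : Fin n) :
    WithTop (Fin n) → Matrix (Fin n × Fin d) (Fin d) ℝ
  | ⊤ => 0
  | (m : Fin n) => Emat n d m * (((U m)ᵀ)⁻¹ * (U j)ᵀ)

@[simp]
theorem Lam_top (i : Fin n) : Lam U V i ⊤ = BLamEnd n d U V i := rfl

@[simp]
theorem Lam_coe (i k : Fin n) : Lam U V i k = BLamMid n d U V i k := rfl

@[simp]
theorem transportedEmat_top (j : Fin n) : transportedEmat (d := d) U j ⊤ = 0 := rfl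

@[simp]
theorem transportedEmat_coe (j m : Fin n) :
    transportedEmat U j m = Emat n d m * (((U m)ᵀ)⁻¹ * (U j)ᵀ) := rfl

theorem Lam_mul_blockQ_mul_Emat (hA : Assumption2 n d U V) {i j : Fin n} {i' : WithTop (Fin n)}
    (hi : ↑i < i') (hj : j ≤ i ∨ i' ≤ ↑j) :
    Lam U V i i' * blockQ n d U V * Emat n d j =
      if j ≤ i then transportedEmat U j i - transportedEmat U j i' else 0 := by
  induction i' using WithTop.recTopCoe with
  | top =>
    have hji : j ≤ i := hj.resolve_right (by simp)
    rw [if_pos hji, Lam_top, transportedEmat_top, transportedEmat_coe, sub_zero,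
      BLamEnd_mul_blockQ_mul_Emat hA hji]
  | coe k =>
    have hik : i < k := WithTop.coe_lt_coe.mp hi
    by_cases hji : j ≤ i
    · rw [if_pos hji, Lam_coe, transportedEmat_coe, transportedEmat_coe,
        BLamMid_mul_blockQ_mul_Emat_of_ge hA hik hji]
    · rw [if_neg hji, Lam_coe, BLamMid_mul_blockQ_mul_Emat_of_le hA hik
        (WithTop.coe_le_coe.mp (hj.resolve_left hji))]

theorem Lam_posSemidef (hA : Assumption2 n d U V) {i : Fin n} {i' : WithTop (Fin n)}
    (hi : ↑i < i') : (Lam U V i i').PosSemidef := by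
  induction i' using WithTop.recTopCoe with
  | top => simpa [BLamEnd] using (hA.1 i).inv.posSemidef.mul_mul_conjTranspose_same (Emat n d i)
  | coe k =>
    simpa [BLamMid] using
      (hA.2 i k (WithTop.coe_lt_coe.mp hi)).inv.posSemidef.mul_mul_conjTranspose_same
        (Emat n d i - Emat n d k * ((U k)ᵀ)⁻¹ * (U i)ᵀ)

theorem Lam_mulVec_mem_blockSupported {S : Finset (Fin n)} {i : Fin n} {i' : WithTop (Fin n)}
    (hi : i ∈ S) (hi' : ∀ k : Fin n, i' = k → k ∈ S) (v : Fin n × Fin d → ℝ) :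
    Lam U V i i' *ᵥ v ∈ blockSupported n d S := by
  induction i' using WithTop.recTopCoe with
  | top =>
    rw [Lam_top, BLamEnd, Matrix.mul_assoc]
    exact Emat_mul_mulVec_mem_blockSupported hi _ v
  | coe k =>
    simp only [Lam_coe, BLamMid, Matrix.sub_mul, Matrix.sub_mulVec, Matrix.mul_assoc]
    exact Submodule.sub_mem _ (Emat_mul_mulVec_mem_blockSupported hi _ v)
      (Emat_mul_mulVec_mem_blockSupported (hi' k rfl) _ v)

/-- `Λ_S`; here `(S.filter (i < ·)).min` is the successor of `i` in `S`, or `⊤` if there is none. -/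
noncomputable def LamSet (U V : Fin n → Matrix (Fin d) (Fin d) ℝ) (S : Finset (Fin n)) :
    Matrix (Fin n × Fin d) (Fin n × Fin d) ℝ :=
  ∑ i ∈ S, Lam U V i (S.filter fun j => i < j).min

theorem LamSet_posSemidef (hA : Assumption2 n d U V) (S : Finset (Fin n)) :
    (LamSet U V S).PosSemidef :=
  posSemidef_sum S fun i _ => Lam_posSemidef hA (S.coe_lt_min_filter_lt i)

theorem LamSet_mulVec_mem_blockSupported (S : Finset (Fin n)) (v : Fin n × Fin d → ℝ) :
    LamSet U V S *ᵥ v ∈ blockSupported n d S := by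
  rw [LamSet, sum_mulVec]
  exact Submodule.sum_mem _ fun i hi => Lam_mulVec_mem_blockSupported hi
    (fun k hk => (Finset.mem_filter.mp (Finset.mem_of_min hk)).1) v

theorem LamSet_mul_blockQ_mul_Emat (hA : Assumption2 n d U V) {S : Finset (Fin n)} {j : Fin n}
    (hj : j ∈ S) : LamSet U V S * blockQ n d U V * Emat n d j = Emat n d j := by
  set T := S.filter fun i => j ≤ i
  have hnext : ∀ i ∈ T, (T.filter fun k => i < k) = S.filter fun k => i < k := fun i hi => by
    rw [Finset.filter_filter]
    exact Finset.filter_congr fun k _ => and_iff_right_of_imp fun hik =>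
      (Finset.mem_filter.mp hi).2.trans hik.le
  have hmin : T.min = j := le_antisymm (Finset.min_le (Finset.mem_filter.mpr ⟨hj, le_rfl⟩))
    (Finset.le_min fun i hi => WithTop.coe_le_coe.mpr (Finset.mem_filter.mp hi).2)
  have hterm : ∀ i ∈ S, Lam U V i (S.filter fun k => i < k).min * blockQ n d U V * Emat n d j =
      if j ≤ i then transportedEmat U j i - transportedEmat U j (S.filter fun k => i < k).min
      else 0 := fun i _ => by
    refine Lam_mul_blockQ_mul_Emat hA (S.coe_lt_min_filter_lt i) ?_
    by_cases hji : j ≤ i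
    · exact Or.inl hji
    · exact Or.inr (Finset.min_le (Finset.mem_filter.mpr ⟨hj, not_le.mp hji⟩))
  calc LamSet U V S * blockQ n d U V * Emat n d j
      = ∑ i ∈ T, (transportedEmat U j i - transportedEmat U j (T.filter fun k => i < k).min) := by
        rw [LamSet, Matrix.sum_mul, Matrix.sum_mul, Finset.sum_congr rfl hterm,
          ← Finset.sum_filter]
        exact Finset.sum_congr rfl fun i hi => by rw [hnext i hi]
    _ = Emat n d j := by
        rw [Finset.sum_sub_min_filter_lt _ rfl, hmin, transportedEmat_coe,
          Matrix.nonsing_inv_mul _ (hA.isUnit_det_U_transpose j), Matrix.mul_one]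

theorem LamSet_mulVec_blockQ_mulVec (hA : Assumption2 n d U V) {S : Finset (Fin n)}
    {x : Fin n × Fin d → ℝ} (hx : x ∈ blockSupported n d S) :
    LamSet U V S *ᵥ blockQ n d U V *ᵥ x = x := by
  conv_lhs => rw [← sum_Emat_mulVec_of_mem_blockSupported hx]
  conv_rhs => rw [← sum_Emat_mulVec_of_mem_blockSupported hx]
  simp only [mulVec_sum, mulVec_mulVec, ← Matrix.mul_assoc]
  exact Finset.sum_congr rfl fun j hj => by rw [LamSet_mul_blockQ_mul_Emat hA hj]

theorem subsetCost_eq (a : Fin n × Fin d → ℝ) (c : Fin n → ℝ) (S : Finset (Fin n)) :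
    subsetCost n d U V a c S = ∑ i ∈ S, c i - 1 / 4 * (a ⬝ᵥ LamSet U V S *ᵥ a) := by
  rw [subsetCost, LamSet, sum_mulVec, dotProduct_sum, Finset.mul_sum, ← Finset.sum_sub_distrib]
  refine Finset.sum_congr rfl fun i _ => ?_
  by_cases h : (S.filter fun j => i < j).Nonempty
  · rw [dif_pos h, ← Finset.coe_min' h, Lam_coe]
  · rw [dif_neg h, Finset.min_eq_top.mpr (Finset.not_nonempty_iff_eq_empty.mp h), Lam_top]

theorem isLeast_quadratic_blockSupported (hA : Assumption2 n d U V) (S : Finset (Fin n))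
    (a : Fin n × Fin d → ℝ) :
    IsLeast ((fun x => x ⬝ᵥ blockQ n d U V *ᵥ x + a ⬝ᵥ x) '' blockSupported n d S)
      (-(1 / 4) * (a ⬝ᵥ LamSet U V S *ᵥ a)) :=
  isLeast_quadratic_of_leftInverseOn (blockQ_isSymm hA) (LamSet_posSemidef hA S)
    (fun _ hx => LamSet_mulVec_blockQ_mulVec hA hx) (LamSet_mulVec_mem_blockSupported S) a

theorem stmt_15_general (n d : ℕ)
    (U V : Fin n → Matrix (Fin d) (Fin d) ℝ) (hA : Assumption2 n d U V)
    (a : Fin n × Fin d → ℝ) (c : Fin n → ℝ) :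
    ∃ m : ℝ,
      IsLeast
        {y : ℝ | ∃ (x : Fin n × Fin d → ℝ) (z : Fin n → ℝ),
          (∀ i : Fin n, z i = 0 ∨ z i = 1) ∧
          (∀ i : Fin n, z i = 0 → ∀ b : Fin d, x (i, b) = 0) ∧
          y = x ⬝ᵥ (blockQ n d U V *ᵥ x) + a ⬝ᵥ x + ∑ i : Fin n, c i * z i} m ∧
      IsLeast {y : ℝ | ∃ S : Finset (Fin n), y = subsetCost n d U V a c S} m := by
  obtain ⟨S₀, -, hS₀⟩ :=
    Finset.exists_min_image Finset.univ (subsetCost n d U V a c) Finset.univ_nonempty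
  refine ⟨subsetCost n d U V a c S₀, ⟨?_, ?_⟩, ⟨S₀, rfl⟩,
    fun _ ⟨S, hS⟩ => hS ▸ hS₀ S (Finset.mem_univ S)⟩
  · obtain ⟨⟨x, hx, hxS₀⟩, -⟩ := isLeast_quadratic_blockSupported hA S₀ a
    refine ⟨x, fun i => if i ∈ S₀ then 1 else 0, fun i => by by_cases h : i ∈ S₀ <;> simp [h],
      fun i hi b => mem_blockSupported.mp hx (i, b) (by simpa using hi), ?_⟩
    simp only [subsetCost_eq, mul_ite, mul_one, mul_zero, Finset.sum_ite_mem, Finset.univ_inter]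
      at hxS₀ ⊢
    linarith
  · rintro _ ⟨x, z, hz, hzx, rfl⟩
    set S := Finset.univ.filter fun i => z i = 1
    have hx : x ∈ blockSupported n d S := mem_blockSupported.mpr fun p hp =>
      hzx p.1 ((hz p.1).resolve_right (by simpa [S] using hp)) p.2
    have hcz : ∑ i, c i * z i = ∑ i ∈ S, c i := by
      rw [Finset.sum_filter]
      exact Finset.sum_congr rfl fun i _ => by rcases hz i with h | h <;> simp [h]
    have hquad := (isLeast_quadratic_blockSupported hA S a).2 ⟨x, hx, rfl⟩
    linarith [hS₀ S (Finset.mem_univ S), subsetCost_eq (U := U) (V := V) a c S]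

theorem stmt_15 (n d : ℕ) (hn : 1 ≤ n) (hd : 1 ≤ d)
    (U V : Fin n → Matrix (Fin d) (Fin d) ℝ) (hA : Assumption2 n d U V)
    (a : Fin n × Fin d → ℝ) (c : Fin n → ℝ) :
    ∃ m : ℝ,
      IsLeast
        {y : ℝ | ∃ (x : Fin n × Fin d → ℝ) (z : Fin n → ℝ),
          (∀ i : Fin n, z i = 0 ∨ z i = 1) ∧
          (∀ i : Fin n, z i = 0 → ∀ b : Fin d, x (i, b) = 0) ∧
          y = x ⬝ᵥ (blockQ n d U V *ᵥ x) + a ⬝ᵥ x + ∑ i : Fin n, c i * z i} m ∧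
      IsLeast {y : ℝ | ∃ S : Finset (Fin n), y = subsetCost n d U V a c S} m :=
  stmt_15_general n d U V hA a c
end

section
/- Let n ≥ 1, let α_1, …, α_n ∈ ℝ be nonzero, and let p_2, …, p_{n+1} > 0. Define Q ∈ ℝ^{n×n} by Q_{ij} = Q_{ji} = Σ_{τ=j+1}^{n+1} p_τ · (Π_{t=1}^{τ−i−1} α_{τ−t}) · (Π_{t=1}^{τ−j−1} α_{τ−t}) for 1 ≤ i ≤ j ≤ n (empty products equal 1). Define u_i = Π_{t=1}^{n−i} α_{n+1−t} and v_i = (Σ_{τ=i+1}^{n+1} p_τ (Π_{t=1}^{τ−i−1} α_{τ−t})²) / u_i for 1 ≤ i ≤ n. Then: (a) Q_{ij} = u_i v_j for all 1 ≤ i ≤ j ≤ n, so Q is the factorizable matrix Q(u,v); (b) u_i v_i > 0 for all i ∈ {1,…,n}; and (c) u_i v_j (u_j v_i − u_i v_j) > 0 for all 1 ≤ i < j ≤ n. Consequently Q satisfies Assumption 1 and is positive definite. -/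
open Matrix BigOperators

/-- The factorizable matrix `Q(u,v)`. -/
noncomputable def facQ (n : ℕ) (u v : Fin n → ℝ) : Matrix (Fin n) (Fin n) ℝ :=
  Matrix.of fun i j => if i ≤ j then u i * v j else u j * v i

/-- Assumption 1. -/
def Assumption1 (n : ℕ) (u v : Fin n → ℝ) : Prop :=
  (∀ i : Fin n, 0 < u i * v i) ∧
    ∀ i j : Fin n, i < j → 0 < u i * v j * (u j * v i - u i * v j)

/-- `Π_{t=1}^{m} α_{τ−t}` (empty product equals 1). -/
noncomputable def prodA (α : ℕ → ℝ) (τ m : ℕ) : ℝ :=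
  ∏ t ∈ Finset.Icc 1 m, α (τ - t)

/-- `Q_{ij} = Σ_{τ=j+1}^{n+1} p_τ (Π_{t=1}^{τ−i−1} α_{τ−t}) (Π_{t=1}^{τ−j−1} α_{τ−t})`
(1-based indices `i ≤ j`). -/
noncomputable def Qent (n : ℕ) (α p : ℕ → ℝ) (i j : ℕ) : ℝ :=
  ∑ τ ∈ Finset.Icc (j + 1) (n + 1), p τ * prodA α τ (τ - i - 1) * prodA α τ (τ - j - 1)

/-- `u_i = Π_{t=1}^{n−i} α_{n+1−t}` (1-based index `i`). -/
noncomputable def uSeq (n : ℕ) (α : ℕ → ℝ) (i : ℕ) : ℝ :=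
  prodA α (n + 1) (n - i)

/-- `v_i = (Σ_{τ=i+1}^{n+1} p_τ (Π_{t=1}^{τ−i−1} α_{τ−t})²) / u_i` (1-based index `i`). -/
noncomputable def vSeq (n : ℕ) (α p : ℕ → ℝ) (i : ℕ) : ℝ :=
  (∑ τ ∈ Finset.Icc (i + 1) (n + 1), p τ * prodA α τ (τ - i - 1) ^ 2) / uSeq n α i

/-- The symmetric matrix with entries `Q_{ij}` (translated to 0-based `Fin n` indices). -/
noncomputable def QfromDyn (n : ℕ) (α p : ℕ → ℝ) : Matrix (Fin n) (Fin n) ℝ :=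
  Matrix.of fun i j =>
    if i ≤ j then Qent n α p ((i : ℕ) + 1) ((j : ℕ) + 1)
    else Qent n α p ((j : ℕ) + 1) ((i : ℕ) + 1)

/-! Write `c(i, j) = α_{i+1} ⋯ α_j`. Every product in `Q` telescopes: `Q_ij = c(i, j) Q_jj` and
`u_i = c(i, j) u_j`, whence `u_i v_j = Q_ij`. For `i < j` the diagonal entry splits as
`Q_ii = T + c(i, j)² Q_jj` with `T = Σ_{i<τ≤j} p_τ c(i, τ-1)² > 0`, so the quantity in (c) equals
`Q_jj T > 0`. Positive definiteness comes from `Q = Wᵀ diag(p₂, …, p_{n+1}) W` with `W` unit lower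
triangular. -/

open Finset

lemma prodA_eq_prod_Ico (α : ℕ → ℝ) {τ m : ℕ} (h : m ≤ τ) :
    prodA α τ m = ∏ s ∈ Ico (τ - m) τ, α s := by
  rw [prodA, ← Ico_add_one_right_eq_Icc, prod_Ico_reflect _ _ (by omega)]
  congr 2
  omega

lemma prodA_sub_sub_one (α : ℕ → ℝ) {i τ : ℕ} (h : i < τ) :
    prodA α τ (τ - i - 1) = ∏ s ∈ Ico (i + 1) τ, α s := by
  rw [prodA_eq_prod_Ico α (by omega)]
  congr 2
  omega

section
variable (n : ℕ) (α p : ℕ → ℝ) {i j : ℕ}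

lemma uSeq_eq_prod_Ico (h : i ≤ n) : uSeq n α i = ∏ s ∈ Ico (i + 1) (n + 1), α s := by
  rw [uSeq, show n - i = n + 1 - i - 1 by omega, prodA_sub_sub_one α (by omega)]

lemma uSeq_eq_prod_mul_uSeq (hij : i ≤ j) (hj : j ≤ n) :
    uSeq n α i = (∏ s ∈ Ico (i + 1) (j + 1), α s) * uSeq n α j := by
  rw [uSeq_eq_prod_Ico n α (hij.trans hj), uSeq_eq_prod_Ico n α hj,
    prod_Ico_consecutive _ (by omega) (by omega)]

lemma uSeq_ne_zero (hα : ∀ s, i < s → s ≤ n → α s ≠ 0) : uSeq n α i ≠ 0 := by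
  rw [uSeq, prodA]
  refine prod_ne_zero_iff.mpr fun t ht => ?_
  rw [mem_Icc] at ht
  exact hα _ (by omega) (by omega)

lemma vSeq_eq_Qent_div : vSeq n α p i = Qent n α p i i / uSeq n α i := by
  simp only [vSeq, Qent, sq, mul_assoc]

lemma Qent_eq_prod_mul_Qent (hij : i ≤ j) :
    Qent n α p i j = (∏ s ∈ Ico (i + 1) (j + 1), α s) * Qent n α p j j := by
  rw [Qent, Qent, mul_sum]
  refine sum_congr rfl fun τ hτ => ?_
  rw [mem_Icc] at hτ
  rw [prodA_sub_sub_one α (by omega : i < τ), prodA_sub_sub_one α (by omega : j < τ),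
    ← prod_Ico_consecutive _ (by omega : i + 1 ≤ j + 1) (by omega : j + 1 ≤ τ)]
  ring

lemma Qent_self_eq_add (hij : i ≤ j) (hj : j ≤ n + 1) :
    Qent n α p i i = ∑ τ ∈ Ioc i j, p τ * prodA α τ (τ - i - 1) * prodA α τ (τ - i - 1) +
      (∏ s ∈ Ico (i + 1) (j + 1), α s) ^ 2 * Qent n α p j j := by
  rw [Qent, Qent, Icc_add_one_left_eq_Ioc, Icc_add_one_left_eq_Ioc,
    ← sum_Ioc_consecutive _ hij hj, mul_sum]
  congr 1
  refine sum_congr rfl fun τ hτ => ?_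
  rw [mem_Ioc] at hτ
  rw [prodA_sub_sub_one α (by omega : i < τ), prodA_sub_sub_one α (by omega : j < τ),
    ← prod_Ico_consecutive _ (by omega : i + 1 ≤ j + 1) (by omega : j + 1 ≤ τ)]
  ring

lemma sum_Ioc_mul_prodA_pos (hij : i < j) (hp : ∀ τ, i < τ → τ ≤ j → 0 < p τ) :
    0 < ∑ τ ∈ Ioc i j, p τ * prodA α τ (τ - i - 1) * prodA α τ (τ - i - 1) := by
  refine sum_pos' (fun τ hτ => ?_) ⟨i + 1, by simp [hij], ?_⟩
  · rw [mem_Ioc] at hτ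
    rw [mul_assoc]
    exact mul_nonneg (hp τ hτ.1 hτ.2).le (mul_self_nonneg _)
  · simpa [prodA] using hp (i + 1) (by omega) (by omega)

lemma Qent_self_pos (hi : i ≤ n) (hp : ∀ τ, i < τ → τ ≤ n + 1 → 0 < p τ) :
    0 < Qent n α p i i := by
  rw [Qent, Icc_add_one_left_eq_Ioc]
  exact sum_Ioc_mul_prodA_pos α p (by omega) hp

lemma uSeq_mul_vSeq (hij : i ≤ j) (hj : j ≤ n) (hu : uSeq n α j ≠ 0) :
    uSeq n α i * vSeq n α p j = Qent n α p i j := by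
  rw [vSeq_eq_Qent_div, uSeq_eq_prod_mul_uSeq n α hij hj, Qent_eq_prod_mul_Qent n α p hij]
  field_simp

lemma uSeq_mul_vSeq_self_pos (hi : i ≤ n) (hα : ∀ s, i < s → s ≤ n → α s ≠ 0)
    (hp : ∀ τ, i < τ → τ ≤ n + 1 → 0 < p τ) :
    0 < uSeq n α i * vSeq n α p i := by
  rw [uSeq_mul_vSeq n α p le_rfl hi (uSeq_ne_zero n α hα)]
  exact Qent_self_pos n α p hi hp

lemma uSeq_mul_vSeq_mul_sub_pos (hij : i < j) (hj : j ≤ n)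
    (hα : ∀ s, i < s → s ≤ n → α s ≠ 0) (hp : ∀ τ, i < τ → τ ≤ n + 1 → 0 < p τ) :
    0 < uSeq n α i * vSeq n α p j * (uSeq n α j * vSeq n α p i - uSeq n α i * vSeq n α p j) := by
  have hc : ∏ s ∈ Ico (i + 1) (j + 1), α s ≠ 0 := prod_ne_zero_iff.mpr fun s hs => by
    rw [mem_Ico] at hs
    exact hα s (by omega) (by omega)
  have hu : uSeq n α j ≠ 0 := uSeq_ne_zero n α fun s hs => hα s (by omega)
  have hui : uSeq n α i * vSeq n α p j = (∏ s ∈ Ico (i + 1) (j + 1), α s) * Qent n α p j j := by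
    rw [uSeq_mul_vSeq n α p hij.le hj hu, Qent_eq_prod_mul_Qent n α p hij.le]
  have huj : uSeq n α j * vSeq n α p i = Qent n α p i i / ∏ s ∈ Ico (i + 1) (j + 1), α s := by
    rw [vSeq_eq_Qent_div, uSeq_eq_prod_mul_uSeq n α hij.le hj]
    field_simp
  rw [hui, huj, Qent_self_eq_add n α p hij.le (by omega)]
  -- with `c = c(i, j)` and `Q_ii = T + c² Q_jj`, the expression reduces to `Q_jj T`
  have cancel (c S T : ℝ) (hc : c ≠ 0) : c * S * ((T + c ^ 2 * S) / c - c * S) = S * T := by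
    field_simp
    ring
  rw [cancel _ _ _ hc]
  exact mul_pos (Qent_self_pos n α p hj fun τ _ hτ => hp τ (by omega) hτ)
    (sum_Ioc_mul_prodA_pos α p hij fun τ hτ hτj => hp τ hτ (by omega))

end

section
variable (n : ℕ) (α p : ℕ → ℝ)

/-- Entry `(k, i)` is `α_{i+2} ⋯ α_{k+1}` for `i ≤ k` (0-based indices): the sensitivity of the
state at time `k + 2` to the `i`-th control. -/
noncomputable def responseMatrix : Matrix (Fin n) (Fin n) ℝ :=
  Matrix.of fun k i => if i ≤ k then prodA α ((k : ℕ) + 2) ((k : ℕ) - i) else 0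

lemma responseMatrix_det : (responseMatrix n α).det = 1 := by
  have hW : (responseMatrix n α).IsLowerTriangular := fun k i hki => if_neg (not_le.mpr hki)
  rw [det_of_isLowerTriangular _ hW]
  exact prod_eq_one fun k _ => by simp [responseMatrix, prodA]

lemma Qent_eq_sum_responseMatrix {i j : Fin n} (hij : i ≤ j) :
    Qent n α p (i + 1) (j + 1) =
      ∑ k, responseMatrix n α k i * p (k + 2) * responseMatrix n α k j := by
  calc Qent n α p (i + 1) (j + 1)
      = ∑ k ∈ Ico (j : ℕ) n, p (k + 2) * prodA α (k + 2) (k - i) * prodA α (k + 2) (k - j) := by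
        have hIcc : Icc ((j : ℕ) + 1 + 1) (n + 1) = (Ico (j : ℕ) n).map (addRightEmbedding 2) := by
          ext τ
          simp only [mem_Icc, mem_map, mem_Ico, addRightEmbedding_apply]
          constructor
          · exact fun h => ⟨τ - 2, by omega, by omega⟩
          · omega
        rw [Qent, hIcc, sum_map]
        refine sum_congr rfl fun k hk => ?_
        rw [mem_Ico] at hk
        rw [addRightEmbedding_apply, show k + 2 - (i + 1) - 1 = k - i by omega,
          show k + 2 - (j + 1) - 1 = k - j by omega]
    _ = ∑ k ∈ range n, if (j : ℕ) ≤ k then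
          p (k + 2) * prodA α (k + 2) (k - i) * prodA α (k + 2) (k - j) else 0 := by
        rw [← sum_filter, range_eq_Ico, Ico_filter_le, max_eq_right (Nat.zero_le _)]
    _ = ∑ k, responseMatrix n α k i * p (k + 2) * responseMatrix n α k j := by
        rw [← Fin.sum_univ_eq_sum_range]
        refine sum_congr rfl fun k _ => ?_
        have hij' : (i : ℕ) ≤ j := hij
        simp only [responseMatrix, of_apply, Fin.le_iff_val_le_val]
        split_ifs <;> first | omega | ring

lemma QfromDyn_eq_transpose_mul_diagonal_mul :
    QfromDyn n α p =
      (responseMatrix n α)ᵀ * diagonal (fun k : Fin n => p (k + 2)) * responseMatrix n α := by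
  ext i j
  rw [mul_apply]
  simp only [QfromDyn, of_apply, mul_diagonal, transpose_apply]
  split_ifs with hij
  · exact Qent_eq_sum_responseMatrix n α p hij
  · rw [Qent_eq_sum_responseMatrix n α p (le_of_not_ge hij)]
    exact sum_congr rfl fun k _ => by ring

lemma QfromDyn_posDef (hp : ∀ τ, 2 ≤ τ → τ ≤ n + 1 → 0 < p τ) : (QfromDyn n α p).PosDef := by
  have hD : (diagonal fun k : Fin n => p (k + 2)).PosDef :=
    posDef_diagonal_iff.mpr fun k => hp _ (by omega) (by omega)
  have hW : Function.Injective (responseMatrix n α).mulVec :=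
    mulVec_injective_iff_isUnit.mpr (by simp [isUnit_iff_isUnit_det, responseMatrix_det])
  simpa [QfromDyn_eq_transpose_mul_diagonal_mul] using hD.conjTranspose_mul_mul_same hW

end

theorem stmt_18_general (n : ℕ) (α p : ℕ → ℝ)
    (hα : ∀ i : ℕ, 1 ≤ i → i ≤ n → α i ≠ 0)
    (hp : ∀ τ : ℕ, 2 ≤ τ → τ ≤ n + 1 → 0 < p τ) :
    (∀ i j : Fin n, i ≤ j →
        Qent n α p ((i : ℕ) + 1) ((j : ℕ) + 1) =
          uSeq n α ((i : ℕ) + 1) * vSeq n α p ((j : ℕ) + 1)) ∧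
    QfromDyn n α p =
      facQ n (fun i => uSeq n α ((i : ℕ) + 1)) (fun i => vSeq n α p ((i : ℕ) + 1)) ∧
    (∀ i : Fin n, 0 < uSeq n α ((i : ℕ) + 1) * vSeq n α p ((i : ℕ) + 1)) ∧
    (∀ i j : Fin n, i < j →
        0 < uSeq n α ((i : ℕ) + 1) * vSeq n α p ((j : ℕ) + 1) *
          (uSeq n α ((j : ℕ) + 1) * vSeq n α p ((i : ℕ) + 1) -
            uSeq n α ((i : ℕ) + 1) * vSeq n α p ((j : ℕ) + 1))) ∧
    Assumption1 n (fun i => uSeq n α ((i : ℕ) + 1)) (fun i => vSeq n α p ((i : ℕ) + 1)) ∧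
    (QfromDyn n α p).PosDef := by
  have hα' (i : Fin n) : ∀ s, (i : ℕ) + 1 < s → s ≤ n → α s ≠ 0 :=
    fun s hs hsn => hα s (by omega) hsn
  have hp' (i : Fin n) : ∀ τ, (i : ℕ) + 1 < τ → τ ≤ n + 1 → 0 < p τ :=
    fun τ hτ hτn => hp τ (by omega) hτn
  have factor (i j : Fin n) (hij : i ≤ j) :
      Qent n α p (i + 1) (j + 1) = uSeq n α (i + 1) * vSeq n α p (j + 1) :=
    (uSeq_mul_vSeq n α p (by simpa using hij) j.isLt (uSeq_ne_zero n α (hα' j))).symm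
  have diag (i : Fin n) : 0 < uSeq n α (i + 1) * vSeq n α p (i + 1) :=
    uSeq_mul_vSeq_self_pos n α p i.isLt (hα' i) (hp' i)
  have offDiag (i j : Fin n) (hij : i < j) :
      0 < uSeq n α (i + 1) * vSeq n α p (j + 1) *
        (uSeq n α (j + 1) * vSeq n α p (i + 1) - uSeq n α (i + 1) * vSeq n α p (j + 1)) :=
    uSeq_mul_vSeq_mul_sub_pos n α p (by simpa using hij) j.isLt (hα' i) (hp' i)
  refine ⟨factor, ?_, diag, offDiag, ⟨diag, offDiag⟩, QfromDyn_posDef n α p hp⟩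
  ext i j
  simp only [QfromDyn, facQ, of_apply]
  split_ifs with hij
  exacts [factor i j hij, factor j i (le_of_not_ge hij)]

theorem stmt_18 (n : ℕ) (hn : 1 ≤ n) (α p : ℕ → ℝ)
    (hα : ∀ i : ℕ, 1 ≤ i → i ≤ n → α i ≠ 0)
    (hp : ∀ τ : ℕ, 2 ≤ τ → τ ≤ n + 1 → 0 < p τ) :
    (∀ i j : Fin n, i ≤ j →
        Qent n α p ((i : ℕ) + 1) ((j : ℕ) + 1) =
          uSeq n α ((i : ℕ) + 1) * vSeq n α p ((j : ℕ) + 1)) ∧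
    QfromDyn n α p =
      facQ n (fun i => uSeq n α ((i : ℕ) + 1)) (fun i => vSeq n α p ((i : ℕ) + 1)) ∧
    (∀ i : Fin n, 0 < uSeq n α ((i : ℕ) + 1) * vSeq n α p ((i : ℕ) + 1)) ∧
    (∀ i j : Fin n, i < j →
        0 < uSeq n α ((i : ℕ) + 1) * vSeq n α p ((j : ℕ) + 1) *
          (uSeq n α ((j : ℕ) + 1) * vSeq n α p ((i : ℕ) + 1) -
            uSeq n α ((i : ℕ) + 1) * vSeq n α p ((j : ℕ) + 1))) ∧
    Assumption1 n (fun i => uSeq n α ((i : ℕ) + 1)) (fun i => vSeq n α p ((i : ℕ) + 1)) ∧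
    (QfromDyn n α p).PosDef :=
  stmt_18_general n α p hα hp
end
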